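/- For any dendrogram Δ over a set A, the merge module M(Δ) is isomorphic, as a persistence module over ℝ with ℤ/2 coefficients, to the direct sum ⊕_B I(life(B)) of interval modules taken over all merge sets B of Δ, where life(B) = [birth(B), death(B)). -/

import Mathlib

open Classical

/-- A dendrogram over a set `A ⊆ X`: for every scale `s ≥ 0` a partition of `A` into
finitely many non-empty blocks, eventually the single-block partition `{A}`,
refining as the scale grows, with only finitely many change (merge) scales. -/
structure Dendrogram (X : Type*) (A : Set X) where
  /-- the partition of `A` at scale `s` -/
  part : ℝ → Set (Set X)
  nonempty_blocks : ∀ s : ℝ, 0 ≤ s → ∀ B ∈ part s, B.Nonempty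
  finite_blocks : ∀ s : ℝ, 0 ≤ s → (part s).Finite
  cover : ∀ s : ℝ, 0 ≤ s → ⋃₀ part s = A
  disjoint_blocks : ∀ s : ℝ, 0 ≤ s → ∀ B ∈ part s, ∀ C ∈ part s, B ≠ C → Disjoint B C
  eventually_single : ∃ r : ℝ, 0 ≤ r ∧ ∀ s : ℝ, r ≤ s → part s = {A}
  refines : ∀ s t : ℝ, 0 ≤ s → s ≤ t → ∀ B ∈ part s, ∃ C ∈ part t, B ⊆ C
  finite_changes : ∃ S : Finset ℝ, ∀ s t : ℝ, 0 ≤ s → s ≤ t →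
      (∀ u ∈ S, ¬(s < u ∧ u ≤ t)) → part s = part t

variable {X : Type*} {A : Set X}

/-- The structure map of the merge module `M(Δ)`: the `ℤ/2`-vector space at scale `s`
has basis the blocks of `Δ(s)`, and `[B] ↦ [B]` if the block `B` still belongs to the
partition at scale `t` (i.e. `Δ_s^t(B) = B`), and `[B] ↦ 0` otherwise. -/
noncomputable def mergeMap (D : Dendrogram X A) (s t : ℝ) :
    (↥(D.part s) →₀ ZMod 2) →ₗ[ZMod 2] (↥(D.part t) →₀ ZMod 2) :=
  Finsupp.lsum (ZMod 2) fun B : ↥(D.part s) =>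
    if h : (B : Set X) ∈ D.part t then Finsupp.lsingle (⟨(B : Set X), h⟩ : ↥(D.part t))
    else 0

/-- The merge sets of a dendrogram: all blocks that appear in some partition. -/
def Dendrogram.blocks (D : Dendrogram X A) : Set (Set X) :=
  {B | ∃ s : ℝ, 0 ≤ s ∧ B ∈ D.part s}

/-- The birth scale of a merge set: the first scale at which it appears. -/
noncomputable def Dendrogram.birth (D : Dendrogram X A) (B : Set X) : ℝ :=
  sInf {s : ℝ | 0 ≤ s ∧ B ∈ D.part s}

/-- The death scale of a merge set: the supremum (possibly `+∞`) of the scales at which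
it is still a block. -/
noncomputable def Dendrogram.death (D : Dendrogram X A) (B : Set X) : EReal :=
  sSup ((fun s : ℝ => (s : EReal)) '' {s : ℝ | 0 ≤ s ∧ B ∈ D.part s})

/-- The half-open life interval `[b, d)` with possibly infinite death, as a predicate. -/
def lifePred (b : ℝ) (d : EReal) (t : ℝ) : Prop := b ≤ t ∧ (t : EReal) < d

/-- The carrier of the interval module `I(J)` for a predicate `J : ℝ → Prop`. -/
abbrev IntCarrier (J : ℝ → Prop) (t : ℝ) : Type := PLift (J t) → ZMod 2

/-- The structure map of the interval module `I(J)`: the identity if `s, t ∈ J`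
and `0` otherwise. -/
noncomputable def intMap (J : ℝ → Prop) {s t : ℝ} (_h : s ≤ t) :
    IntCarrier J s →ₗ[ZMod 2] IntCarrier J t where
  toFun f := fun _ht => if hs : J s then f ⟨hs⟩ else 0
  map_add' f g := by
    funext ht; by_cases hs : J s <;> simp [hs]
  map_smul' c f := by
    funext ht; by_cases hs : J s <;> simp [hs]

/-- The carrier of a direct sum of interval modules. -/
abbrev SumCarrier {ι : Type*} (J : ι → ℝ → Prop) (t : ℝ) : Type _ :=
  ∀ i : ι, IntCarrier (J i) t

/-- The structure map of a direct sum of interval modules. -/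
noncomputable def sumMap {ι : Type*} (J : ι → ℝ → Prop) {s t : ℝ} (h : s ≤ t) :
    SumCarrier J s →ₗ[ZMod 2] SumCarrier J t where
  toFun f := fun i => intMap (J i) h (f i)
  map_add' f g := funext fun i => map_add (intMap (J i) h) (f i) (g i)
  map_smul' c f := funext fun i => map_smul (intMap (J i) h) c (f i)

/-! Whether a set `B` is a block of `Δ(t)` is, as a function of `t`, the indicator of an
interval: if `B` is a block at scales `s ≤ u`, the block containing `B` at any scale in between
is still contained in a block at scale `u`, which can only be `B` itself. Since `Δ` has finitely
many jumps and is right-continuous, this interval is closed on the left and open on the right,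
i.e. it is exactly `[birth B, death B)`. So the basis of `M(Δ)_t` is indexed by the merge sets
alive at `t`, and both structure maps keep a basis vector exactly when its merge set is still
alive. -/

lemma mergeMap_apply (D : Dendrogram X A) (s t : ℝ) (x : ↥(D.part s) →₀ ZMod 2)
    (C : ↥(D.part t)) :
    mergeMap D s t x C = if h : (C : Set X) ∈ D.part s then x ⟨C, h⟩ else 0 := by
  induction x using Finsupp.induction_linear with
  | zero => simp
  | add f g hf hg => rw [map_add, Finsupp.add_apply, hf, hg]; split_ifs <;> simp
  | single B b =>
    rw [mergeMap, Finsupp.lsum_single]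
    by_cases hBC : (B : Set X) = C
    · obtain ⟨B, hBs⟩ := B
      obtain ⟨C, hCt⟩ := C
      subst hBC
      simp [hBs, hCt]
    · split <;> simp [Subtype.ext_iff, hBC]

lemma sumMap_apply {ι : Type*} (J : ι → ℝ → Prop) {s t : ℝ} (h : s ≤ t) (f : SumCarrier J s)
    (i : ι) (hi : PLift (J i t)) :
    sumMap J h f i hi = if hs : J i s then f i ⟨hs⟩ else 0 :=
  rfl

open Topology

namespace Dendrogram

variable (D : Dendrogram X A)

lemma mem_part_of_le_of_le {B : Set X} {s t u : ℝ} (hs : 0 ≤ s) (hst : s ≤ t) (htu : t ≤ u)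
    (hBs : B ∈ D.part s) (hBu : B ∈ D.part u) : B ∈ D.part t := by
  obtain ⟨C, hC, hBC⟩ := D.refines s t hs hst B hBs
  obtain ⟨C', hC', hCC'⟩ := D.refines t u (hs.trans hst) htu C hC
  obtain ⟨x, hx⟩ := D.nonempty_blocks s hs B hBs
  have hBC' : B = C' := by
    by_contra hne
    exact Set.disjoint_left.mp (D.disjoint_blocks u (hs.trans (hst.trans htu)) B hBu C' hC' hne)
      hx (hCC' (hBC hx))
  rwa [Set.Subset.antisymm (hBC' ▸ hCC') hBC] at hC

lemma exists_gt_eqOn_Icc {t : ℝ} (ht : 0 ≤ t) :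
    ∃ t' > t, Set.EqOn D.part (fun _ => D.part t) (Set.Icc t t') := by
  obtain ⟨S, hS⟩ := D.finite_changes
  have hnoChange : ∀ᶠ t' in 𝓝[>] t, ∀ v ∈ S, ¬(t < v ∧ v ≤ t') := by
    refine (Filter.eventually_all_finset S).2 fun v _ => ?_
    by_cases hv : t < v
    · filter_upwards [nhdsWithin_le_nhds (Iio_mem_nhds hv)] with t' ht' h using
        (not_le.2 ht') h.2
    · exact Filter.Eventually.of_forall fun _ h => hv h.1
  obtain ⟨t', hS', htt'⟩ := (hnoChange.and self_mem_nhdsWithin).exists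
  exact ⟨t', htt', fun u hu => (hS t u ht hu.1 fun v hv hvu =>
    hS' v hv ⟨hvu.1, hvu.2.trans hu.2⟩).symm⟩

lemma birth_nonneg {B : Set X} (hB : B ∈ D.blocks) : 0 ≤ D.birth B :=
  le_csInf hB fun _ hs => hs.1

lemma mem_part_birth {B : Set X} (hB : B ∈ D.blocks) : B ∈ D.part (D.birth B) := by
  obtain ⟨t', hbt', hconst⟩ := D.exists_gt_eqOn_Icc (D.birth_nonneg hB)
  obtain ⟨s, hs, hst'⟩ := exists_lt_of_csInf_lt hB hbt'
  have hbs : D.birth B ≤ s := csInf_le ⟨0, fun _ hu => hu.1⟩ hs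
  have hsb : D.part s = D.part (D.birth B) := hconst ⟨hbs, hst'.le⟩
  exact hsb ▸ hs.2

theorem mem_part_iff {B : Set X} {t : ℝ} (ht : 0 ≤ t) :
    B ∈ D.part t ↔ B ∈ D.blocks ∧ lifePred (D.birth B) (D.death B) t := by
  constructor
  · intro hBt
    obtain ⟨t', htt', hconst⟩ := D.exists_gt_eqOn_Icc ht
    have hBt' : B ∈ D.part t' := (hconst ⟨htt'.le, le_rfl⟩).symm ▸ hBt
    refine ⟨⟨t, ht, hBt⟩, csInf_le ⟨0, fun _ hu => hu.1⟩ ⟨ht, hBt⟩, ?_⟩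
    calc (t : EReal) < t' := EReal.coe_lt_coe_iff.2 htt'
      _ ≤ D.death B := le_sSup ⟨t', ⟨ht.trans htt'.le, hBt'⟩, rfl⟩
  · rintro ⟨hB, hbt, htd⟩
    obtain ⟨_, ⟨u, ⟨_, hBu⟩, rfl⟩, htu⟩ := lt_sSup_iff.1 htd
    exact D.mem_part_of_le_of_le (D.birth_nonneg hB) hbt (EReal.coe_lt_coe_iff.1 htu).le
      (D.mem_part_birth hB) hBu

abbrev life (B : ↥D.blocks) : ℝ → Prop := lifePred (D.birth B) (D.death B)

noncomputable def mergeModuleEquiv {t : ℝ} (ht : 0 ≤ t) :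
    (↥(D.part t) →₀ ZMod 2) ≃ₗ[ZMod 2] SumCarrier D.life t :=
  haveI := (D.finite_blocks t ht).to_subtype
  Finsupp.linearEquivFunOnFinite (ZMod 2) (ZMod 2) _ ≪≫ₗ
  { toFun f B h := f ⟨B, (D.mem_part_iff ht).2 ⟨B.2, h.down⟩⟩
    invFun g C := g ⟨C, t, ht, C.2⟩ ⟨((D.mem_part_iff ht).1 C.2).2⟩
    map_add' _ _ := rfl
    map_smul' _ _ := rfl
    left_inv _ := rfl
    right_inv _ := rfl }

lemma mergeModuleEquiv_apply {t : ℝ} (ht : 0 ≤ t) (x : ↥(D.part t) →₀ ZMod 2) (B : ↥D.blocks)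
    (hB : PLift (D.life B t)) :
    D.mergeModuleEquiv ht x B hB = x ⟨B, (D.mem_part_iff ht).2 ⟨B.2, hB.down⟩⟩ :=
  rfl

end Dendrogram

/-- Lemma (merge module decomposition).  For any dendrogram `Δ`, the merge module `M(Δ)`
is isomorphic, as a persistence module over `ℝ` with `ℤ/2` coefficients, to the direct
sum `⊕_B I(life B)` of interval modules over all merge sets `B` of `Δ`, where
`life B = [birth B, death B)`. -/
theorem merge_module_decomposition (D : Dendrogram X A) :
    ∃ e : ∀ t : ℝ, 0 ≤ t →
        ((↥(D.part t) →₀ ZMod 2) ≃ₗ[ZMod 2]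
          SumCarrier (fun B : ↥D.blocks => lifePred (D.birth B) (D.death B)) t),
      ∀ (s t : ℝ) (hs : 0 ≤ s) (h : s ≤ t) (x : ↥(D.part s) →₀ ZMod 2),
        e t (hs.trans h) (mergeMap D s t x) =
          sumMap (fun B : ↥D.blocks => lifePred (D.birth B) (D.death B)) h (e s hs x) := by
  refine ⟨fun t ht => D.mergeModuleEquiv ht, fun s t hs h x => ?_⟩
  funext B hBt
  have hlife : (B : Set X) ∈ D.part s ↔ D.life B s :=
    (D.mem_part_iff hs).trans (and_iff_right B.2)
  rw [D.mergeModuleEquiv_apply, mergeMap_apply D, sumMap_apply]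
  by_cases hBs : (B : Set X) ∈ D.part s
  · rw [dif_pos hBs, dif_pos (hlife.1 hBs), D.mergeModuleEquiv_apply]
  · rw [dif_neg hBs, dif_neg (mt hlife.2 hBs)]
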